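/- arXiv:1707.04331 — 3 statements merged into one kernel-verified Lean document; each statement's English description precedes it below -/
import Mathlib

section
/- Any doubly substochastic nonnegative m×m matrix X (all row sums and column sums at most 1) can be written as a convex combination of subpermutation matrices: X = Σᵢ αᵢ Mᵢ with αᵢ ≥ 0, Σᵢ αᵢ = 1, and each Mᵢ a 0-1 matrix with at most one 1 per row and column. -/
/-!
Pad `X` to the doubly stochastic matrix `[[X, D₁], [D₂, Xᵀ]]` on `n ⊕ n`, where the diagonal
blocks `D₁`, `D₂` carry the row and column deficits of `X`. Birkhoff's theorem writes this
dilation as a convex combination of permutation matrices, and restricting to the top-left block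
turns each permutation matrix into a subpermutation matrix and the combination into one for `X`.
-/

open Finset

namespace Matrix

variable {R n : Type*} [DecidableEq n]

lemma permMatrix_apply_eq_zero_or_one [Zero R] [One R] (σ : Equiv.Perm n) (i j : n) :
    σ.permMatrix R i j = 0 ∨ σ.permMatrix R i j = 1 := by
  rw [Equiv.Perm.permMatrix, PEquiv.toMatrix_apply]
  split_ifs <;> simp

variable [Fintype n]

def substochasticDilation [Ring R] (X : Matrix n n R) : Matrix (n ⊕ n) (n ⊕ n) R :=
  fromBlocks X (diagonal fun i => 1 - ∑ j, X i j) (diagonal fun j => 1 - ∑ i, X i j) Xᵀ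

lemma substochasticDilation_mem_doublyStochastic [Ring R] [PartialOrder R] [IsOrderedRing R]
    {X : Matrix n n R} (hnn : ∀ i j, 0 ≤ X i j) (hrow : ∀ i, ∑ j, X i j ≤ 1)
    (hcol : ∀ j, ∑ i, X i j ≤ 1) :
    X.substochasticDilation ∈ doublyStochastic R (n ⊕ n) := by
  refine mem_doublyStochastic_iff_sum.2 ⟨?_, ?_, ?_⟩
  · rintro (i | i) (j | j)
    · exact hnn i j
    · simp only [substochasticDilation, fromBlocks_apply₁₂, diagonal_apply]
      split_ifs
      exacts [sub_nonneg.2 (hrow _), le_rfl]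
    · simp only [substochasticDilation, fromBlocks_apply₂₁, diagonal_apply]
      split_ifs
      exacts [sub_nonneg.2 (hcol _), le_rfl]
    · exact hnn j i
  · rintro (i | i) <;> simp [substochasticDilation, Fintype.sum_sum_type, diagonal_apply]
  · rintro (j | j) <;> simp [substochasticDilation, Fintype.sum_sum_type, diagonal_apply]

variable {m : Type*} [Fintype m]

lemma sum_submatrix_row_le_one_of_mem_doublyStochastic [Semiring R] [PartialOrder R]
    [IsOrderedRing R] {M : Matrix n n R} (hM : M ∈ doublyStochastic R n) (r : m → n) (c : m ↪ n)
    (i : m) : ∑ j, M.submatrix r c i j ≤ 1 := by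
  calc ∑ j, M.submatrix r c i j = ∑ j ∈ univ.map c, M (r i) j := (sum_map _ _ _).symm
    _ ≤ ∑ j, M (r i) j :=
      sum_le_univ_sum_of_nonneg fun _ => nonneg_of_mem_doublyStochastic hM
    _ = 1 := sum_row_of_mem_doublyStochastic hM _

lemma sum_submatrix_col_le_one_of_mem_doublyStochastic [Semiring R] [PartialOrder R]
    [IsOrderedRing R] {M : Matrix n n R} (hM : M ∈ doublyStochastic R n) (r : m ↪ n) (c : m → n)
    (j : m) : ∑ i, M.submatrix r c i j ≤ 1 :=
  sum_submatrix_row_le_one_of_mem_doublyStochastic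
    (transpose_mem_doublyStochastic_iff.2 hM) c r j

end Matrix

open Matrix

/-- Birkhoff–von Neumann decomposition for doubly substochastic matrices:
any nonnegative m×m matrix with all row and column sums at most 1 is a
convex combination of subpermutation (0-1, row/column sums ≤ 1) matrices. -/
theorem stmt_2 (m : ℕ) (X : Matrix (Fin m) (Fin m) ℝ)
    (hnn : ∀ i j, 0 ≤ X i j)
    (hrow : ∀ i, ∑ j, X i j ≤ 1)
    (hcol : ∀ j, ∑ i, X i j ≤ 1) :
    ∃ (n : ℕ) (α : Fin n → ℝ) (M : Fin n → Matrix (Fin m) (Fin m) ℝ),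
      (∀ k, 0 ≤ α k) ∧ (∑ k, α k = 1) ∧
      (∀ k i j, M k i j = 0 ∨ M k i j = 1) ∧
      (∀ k i, ∑ j, M k i j ≤ 1) ∧
      (∀ k j, ∑ i, M k i j ≤ 1) ∧
      X = ∑ k, α k • M k := by
  obtain ⟨w, hw_nonneg, hw_sum, hw_eq⟩ := exists_eq_sum_perm_of_mem_doublyStochastic
    (substochasticDilation_mem_doublyStochastic hnn hrow hcol)
  let e := (Fintype.equivFin (Equiv.Perm (Fin m ⊕ Fin m))).symm
  let P : Equiv.Perm (Fin m ⊕ Fin m) → Matrix (Fin m) (Fin m) ℝ :=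
    fun σ => (σ.permMatrix ℝ).submatrix Sum.inl Sum.inl
  refine ⟨_, w ∘ e, P ∘ e, fun k => hw_nonneg _, (Equiv.sum_comp e w).trans hw_sum,
    fun k i j => permMatrix_apply_eq_zero_or_one _ _ _,
    fun k => sum_submatrix_row_le_one_of_mem_doublyStochastic permMatrix_mem_doublyStochastic _
      Function.Embedding.inl,
    fun k => sum_submatrix_col_le_one_of_mem_doublyStochastic permMatrix_mem_doublyStochastic
      Function.Embedding.inl _, ?_⟩
  calc X = X.substochasticDilation.submatrix Sum.inl Sum.inl := rfl
    _ = ∑ σ, w σ • P σ := by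
      ext i j
      simp [P, ← hw_eq, Matrix.sum_apply]
    _ = ∑ k, (w ∘ e) k • (P ∘ e) k := (Equiv.sum_comp e fun σ => w σ • P σ).symm
end

section
/- Let σ be a continuous schedule for jobs J with weights w_j, and define the fractional cost of σ as Σ_j w_j ∫₀¹ C̃_j(v)dv where C̃_j(v) is the earliest time j is v-fraction complete. Let λ have density 2v on (0,1] and C*_j := ⌈C̃_j(λ)/λ⌉. Then E[Σ_j w_j C*_j] ≤ 2·Σ_j w_j ∫₀¹ C̃_j(v)dv + Σ_j w_j. -/
/-- For nondecreasing fractional-completion curves C̃_j and λ with density 2v on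
(0,1], setting C*_j = ⌈C̃_j(λ)/λ⌉ gives
E[Σ_j w_j C*_j] ≤ 2 Σ_j w_j ∫₀¹ C̃_j(v) dv + Σ_j w_j. -/
theorem stmt_15 {J : Type*} [Fintype J] (w : J → ℝ) (C : J → ℝ → ℝ)
    (hw : ∀ j, 0 ≤ w j)
    (hmono : ∀ j, MonotoneOn (C j) (Set.Ioc 0 1))
    (hnn : ∀ j, ∀ v ∈ Set.Ioc (0:ℝ) 1, 0 ≤ C j v)
    (hint : ∀ j, MeasureTheory.IntegrableOn (C j) (Set.Ioc 0 1)) :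
    ∫ v in Set.Ioc (0:ℝ) 1, (2 * v) * ∑ j, w j * (⌈C j v / v⌉ : ℝ) ≤
      2 * (∑ j, w j * ∫ v in Set.Ioc (0:ℝ) 1, C j v) + ∑ j, w j := by
  classical
  have hv2 : MeasureTheory.IntegrableOn (fun v : ℝ => (2:ℝ) * v) (Set.Ioc 0 1) := by
    apply Continuous.integrableOn_Ioc
    continuity
  have hg : MeasureTheory.IntegrableOn
      (fun v => ∑ j, w j * (2 * C j v + 2 * v)) (Set.Ioc 0 1) := by
    apply MeasureTheory.integrable_finset_sum
    intro j _
    exact (((hint j).const_mul 2).add hv2).const_mul (w j)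
  have hle : ∀ᵐ v ∂(MeasureTheory.volume.restrict (Set.Ioc (0:ℝ) 1)),
      2 * v * ∑ j, w j * (⌈C j v / v⌉ : ℝ) ≤ ∑ j, w j * (2 * C j v + 2 * v) := by
    filter_upwards [MeasureTheory.ae_restrict_mem measurableSet_Ioc] with v hv
    rw [Finset.mul_sum]
    apply Finset.sum_le_sum
    intro j _
    have hv0 : (0:ℝ) < v := hv.1
    have h1 : 2 * v * (⌈C j v / v⌉ : ℝ) ≤ 2 * C j v + 2 * v := by
      have := Int.ceil_lt_add_one (C j v / v)
      have hle' : (⌈C j v / v⌉ : ℝ) ≤ C j v / v + 1 := le_of_lt this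
      calc 2 * v * (⌈C j v / v⌉ : ℝ) ≤ 2 * v * (C j v / v + 1) := by
            apply mul_le_mul_of_nonneg_left hle'
            positivity
        _ = 2 * C j v + 2 * v := by
            field_simp
    calc 2 * v * (w j * (⌈C j v / v⌉ : ℝ)) = w j * (2 * v * (⌈C j v / v⌉ : ℝ)) := by ring
      _ ≤ w j * (2 * C j v + 2 * v) := mul_le_mul_of_nonneg_left h1 (hw j)
  have h0 : ∀ᵐ v ∂(MeasureTheory.volume.restrict (Set.Ioc (0:ℝ) 1)),
      0 ≤ 2 * v * ∑ j, w j * (⌈C j v / v⌉ : ℝ) := by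
    filter_upwards [MeasureTheory.ae_restrict_mem measurableSet_Ioc] with v hv
    have hv0 : (0:ℝ) < v := hv.1
    have : 0 ≤ ∑ j, w j * (⌈C j v / v⌉ : ℝ) := by
      apply Finset.sum_nonneg
      intro j _
      have hc : (0:ℝ) ≤ C j v / v := div_nonneg (hnn j v hv) hv0.le
      have : (0:ℤ) ≤ ⌈C j v / v⌉ := Int.ceil_nonneg hc
      exact mul_nonneg (hw j) (by exact_mod_cast this)
    positivity
  have hmain := MeasureTheory.integral_mono_of_nonneg h0 hg hle
  refine hmain.trans_eq ?_
  rw [MeasureTheory.integral_finset_sum]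
  · have hvint : (∫ v in Set.Ioc (0:ℝ) 1, v) = 1/2 := by
      rw [← intervalIntegral.integral_of_le (by norm_num : (0:ℝ) ≤ 1)]
      simp [integral_id]
    have : ∀ j, (∫ v in Set.Ioc (0:ℝ) 1, w j * (2 * C j v + 2 * v))
        = w j * (2 * (∫ v in Set.Ioc (0:ℝ) 1, C j v) + 1) := by
      intro j
      rw [MeasureTheory.integral_const_mul,
        MeasureTheory.integral_add ((hint j).const_mul 2) hv2,
        MeasureTheory.integral_const_mul, MeasureTheory.integral_const_mul, hvint]
      ring
    simp_rw [this]
    rw [Finset.mul_sum, ← Finset.sum_add_distrib]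
    apply Finset.sum_congr rfl
    intros
    ring
  · intro j _
    exact (((hint j).const_mul 2).add hv2).const_mul (w j)
end

section
/- Let y : F → ℝ≥0 with Σ y(F) = 1 and integer values C(F) ≥ 1, and define C̃(v) := (t−1) + (v−v₀)/(v₂−v₀) for v ∈ (v₀, v₂], where t is the smallest integer with Σ_{C(F)≤t} y(F) ≥ v and v₀ = Σ_{C(F)≤t−1} y(F), v₂ = Σ_{C(F)≤t} y(F). Then ∫₀¹ C̃(v) dv = Σ_F y(F)·(C(F) − 1/2). -/
open MeasureTheory Finset


/-- The integral of the smeared (piecewise-linear) quantile function C̃ of the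
completion-time distribution equals the mean completion time minus 1/2:
∫₀¹ C̃(v) dv = Σ_F y(F)(C(F) − 1/2). -/
theorem stmt_18 {F : Type*} [Fintype F] (y : F → ℝ) (C : F → ℕ)
    (hy : ∀ f, 0 ≤ y f) (hsum : ∑ f, y f = 1) (hC : ∀ f, 1 ≤ C f)
    (W : ℕ → ℝ)
    (hW : ∀ t, W t = ∑ f ∈ Finset.univ.filter (fun f => C f ≤ t), y f)
    (Ct : ℝ → ℝ)
    (hCt : ∀ v ∈ Set.Ioc (0:ℝ) 1, ∀ t : ℕ, t = sInf {s : ℕ | v ≤ W s} →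
      Ct v = ((t : ℝ) - 1) + (v - W (t - 1)) / (W t - W (t - 1))) :
    ∫ v in Set.Ioc (0:ℝ) 1, Ct v = ∑ f, y f * ((C f : ℝ) - 1 / 2) := by
  classical
  rcases isEmpty_or_nonempty F with hF | hF
  · simp at hsum
  set T := Finset.univ.sup C with hT
  have hWmono : Monotone W := by
    intro a b hab
    rw [hW, hW]
    apply Finset.sum_le_sum_of_subset_of_nonneg
    · intro f hf
      simp only [Finset.mem_filter, Finset.mem_univ, true_and] at hf ⊢
      exact hf.trans hab
    · intro f _ _; exact hy f
  have hW0 : W 0 = 0 := by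
    rw [hW]
    apply Finset.sum_eq_zero
    intro f hf
    simp only [Finset.mem_filter] at hf
    have := hC f
    omega
  have hWT : W T = 1 := by
    rw [hW, ← hsum]
    apply Finset.sum_congr _ (fun _ _ => rfl)
    apply Finset.filter_true_of_mem
    intro f _
    exact Finset.le_sup (Finset.mem_univ f)
  have hWle1 : ∀ s, W s ≤ 1 := by
    intro s
    rw [hW, ← hsum]
    exact Finset.sum_le_sum_of_subset_of_nonneg (Finset.filter_subset _ _)
      (fun f _ _ => hy f)
  -- pointwise formula on each interval
  have key : ∀ t : ℕ, ∀ v ∈ Set.Ioc (W t) (W (t+1)),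
      Ct v = (t:ℝ) + (v - W t) / (W (t+1) - W t) := by
    intro t v hv
    have h0v : (0:ℝ) < v := lt_of_le_of_lt (hW0 ▸ hWmono (Nat.zero_le t)) hv.1
    have hv1 : v ≤ 1 := le_trans hv.2 (hWle1 _)
    have hsInf : sInf {s : ℕ | v ≤ W s} = t + 1 := by
      apply le_antisymm
      · exact Nat.sInf_le hv.2
      · apply le_csInf ⟨t + 1, hv.2⟩
        intro s hs
        by_contra h
        push_neg at h
        have hst : s ≤ t := Nat.lt_succ_iff.mp h
        exact absurd hs (not_le.mpr (lt_of_le_of_lt (hWmono hst) hv.1))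
    rw [hCt v ⟨h0v, hv1⟩ (t+1) hsInf.symm]
    simp only [Nat.add_sub_cancel]
    push_cast
    ring
  have hint : ∀ t : ℕ, IntervalIntegrable Ct volume (W t) (W (t+1)) := by
    intro t
    have hle : W t ≤ W (t+1) := hWmono (Nat.le_succ t)
    rw [intervalIntegrable_iff]
    rw [Set.uIoc_of_le hle]
    have hcont : Continuous (fun v => (t:ℝ) + (v - W t) / (W (t+1) - W t)) :=
      continuous_const.add ((continuous_id.sub continuous_const).div_const _)
    exact ((hcont.integrableOn_Ioc)).congr_fun
      (fun v hv => (key t v hv).symm) measurableSet_Ioc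
  have hval : ∀ t : ℕ, ∫ v in (W t)..(W (t+1)), Ct v
      = (W (t+1) - W t) * ((t:ℝ) + 1/2) := by
    intro t
    have hle : W t ≤ W (t+1) := hWmono (Nat.le_succ t)
    rw [intervalIntegral.integral_of_le hle,
      MeasureTheory.setIntegral_congr_fun measurableSet_Ioc (fun v hv => key t v hv)]
    rcases eq_or_lt_of_le hle with heq | hlt
    · rw [← heq]
      simp
    · have hΔ : W (t+1) - W t ≠ 0 := sub_ne_zero.mpr hlt.ne'
      rw [← intervalIntegral.integral_of_le hle]
      have h1 : ∫ v in (W t)..(W (t+1)), ((t:ℝ) + (v - W t) / (W (t+1) - W t))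
          = (∫ v in (W t)..(W (t+1)), (t:ℝ))
            + (∫ v in (W t)..(W (t+1)), (v - W t)) / (W (t+1) - W t) := by
        rw [← intervalIntegral.integral_div]
        apply intervalIntegral.integral_add intervalIntegrable_const
        exact ((continuous_id.sub continuous_const).div_const _).intervalIntegrable _ _
      rw [h1]
      have h2 : ∫ v in (W t)..(W (t+1)), (v - W t)
          = (∫ v in (W t)..(W (t+1)), v) - ∫ v in (W t)..(W (t+1)), (W t : ℝ) := by
        apply intervalIntegral.integral_sub
          (continuous_id.intervalIntegrable _ _) intervalIntegrable_const
      rw [h2, integral_id, intervalIntegral.integral_const,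
        intervalIntegral.integral_const]
      field_simp
      ring
  -- split the integral
  have hsplit : ∑ t ∈ Finset.range T, ∫ v in (W t)..(W (t+1)), Ct v
      = ∫ v in (W 0)..(W T), Ct v :=
    intervalIntegral.sum_integral_adjacent_intervals (fun k _ => hint k)
  have h01 : ∫ v in Set.Ioc (0:ℝ) 1, Ct v = ∫ v in (W 0)..(W T), Ct v := by
    rw [hW0, hWT]
    exact (intervalIntegral.integral_of_le (by norm_num)).symm
  have hLHS : ∫ v in Set.Ioc (0:ℝ) 1, Ct v
      = ∑ t ∈ Finset.range T, (W (t+1) - W t) * ((t:ℝ) + 1/2) := by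
    rw [h01, ← hsplit]
    exact Finset.sum_congr rfl (fun t _ => hval t)
  rw [hLHS]
  -- now the combinatorial identity
  have hfiber : ∀ t : ℕ, W (t+1) - W t
      = ∑ f ∈ Finset.univ.filter (fun f => C f = t+1), y f := by
    intro t
    rw [hW, hW]
    have hU : (Finset.univ.filter (fun f => C f ≤ t+1))
        = Finset.univ.filter (fun f => C f ≤ t)
          ∪ Finset.univ.filter (fun f => C f = t+1) := by
      ext f; simp only [Finset.mem_filter, Finset.mem_union, Finset.mem_univ, true_and]
      omega
    have hd : Disjoint (Finset.univ.filter (fun f => C f ≤ t))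
        (Finset.univ.filter (fun f => C f = t+1)) := by
      rw [Finset.disjoint_left]
      intro f h1 h2
      simp only [Finset.mem_filter] at h1 h2
      omega
    rw [hU, Finset.sum_union hd]
    ring
  calc ∑ t ∈ Finset.range T, (W (t+1) - W t) * ((t:ℝ) + 1/2)
      = ∑ t ∈ Finset.range T, ∑ f ∈ Finset.univ.filter (fun f => C f - 1 = t),
          y f * ((C f : ℝ) - 1/2) := by
        apply Finset.sum_congr rfl
        intro t _
        rw [hfiber, Finset.sum_mul]
        have : (Finset.univ.filter (fun f => C f - 1 = t))
            = Finset.univ.filter (fun f => C f = t+1) := by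
          ext f
          simp only [Finset.mem_filter, Finset.mem_univ, true_and]
          have := hC f; omega
        rw [this]
        apply Finset.sum_congr rfl
        intro f hf
        simp only [Finset.mem_filter] at hf
        rw [hf.2]
        push_cast
        ring
    _ = ∑ f, y f * ((C f : ℝ) - 1/2) := by
        apply Finset.sum_fiberwise_of_maps_to
        intro f _
        rw [Finset.mem_range]
        have h1 := hC f
        have h2 : C f ≤ T := Finset.le_sup (Finset.mem_univ f)
        omega
end
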